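/- arXiv:1707.01010 — 2 statements merged into one kernel-verified Lean document; each statement's English description precedes it below -/
import Mathlib

section
/- Every cyclic permutation of an ins-robust primitive word is ins-robust primitive. -/
/-- `wpow v n` is the word `v` repeated `n` times. -/
def wpow {V : Type*} (v : List V) : ℕ → List V
  | 0 => []
  | n + 1 => v ++ wpow v n

/-- A word is primitive if it is nonempty and not a proper power. -/
def Primitive {V : Type*} (w : List V) : Prop :=
  w ≠ [] ∧ ∀ (v : List V) (n : ℕ), w = wpow v n → n = 1

/-- A word is ins-robust if it is primitive and inserting any letter at any
position yields a primitive word. -/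
def InsRobust {V : Type*} (w : List V) : Prop :=
  Primitive w ∧ ∀ (x y : List V) (a : V), w = x ++ y → Primitive (x ++ a :: y)

/-- `HasPeriod w p` : the word `w` is periodic with period `p`. -/
def HasPeriod {V : Type*} (w : List V) (p : ℕ) : Prop :=
  ∀ i, i + p < w.length → w[i]? = w[i + p]?

lemma wpow_nil {V : Type*} (n : ℕ) : wpow ([] : List V) n = [] := by
  induction n <;> simp [wpow, *]

lemma length_wpow {V : Type*} (v : List V) (n : ℕ) :
    (wpow v n).length = n * v.length := by
  induction n with
  | zero => simp [wpow]
  | succ m ih => simp [wpow, ih, Nat.succ_mul]; omega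

lemma wpow_swap {V : Type*} (s t : List V) (n : ℕ) :
    wpow (s ++ t) n ++ s = s ++ wpow (t ++ s) n := by
  induction n with
  | zero => simp [wpow]
  | succ m ih => simp [wpow, List.append_assoc] at ih ⊢; rw [ih]

lemma rotate_wpow_self {V : Type*} (v : List V) (m : ℕ) :
    (wpow v (m + 1)).rotate v.length = wpow v (m + 1) := by
  rw [List.rotate_eq_drop_append_take]
  · show ((v ++ wpow v m).drop v.length) ++ ((v ++ wpow v m).take v.length)
        = wpow v (m + 1)
    rw [List.drop_left, List.take_left]
    have := wpow_swap v ([] : List V) m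
    simp at this
    simp [wpow, this]
  · rw [length_wpow, Nat.succ_mul]; omega

lemma rotate_wpow_mul {V : Type*} (v : List V) (m q r : ℕ) :
    (wpow v (m + 1)).rotate (q * v.length + r) = (wpow v (m + 1)).rotate r := by
  induction q with
  | zero => simp
  | succ p ih =>
    have : (p + 1) * v.length + r = v.length + (p * v.length + r) := by ring
    rw [this, ← List.rotate_rotate, rotate_wpow_self, ih]

lemma rotate_wpow_lt {V : Type*} (v : List V) (m r : ℕ) (hr : r < v.length) :
    (wpow v (m + 1)).rotate r = wpow (v.drop r ++ v.take r) (m + 1) := by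
  set s := v.take r with hs
  set t := v.drop r with ht
  have hsl : s.length = r := by simp [hs]; omega
  have hv : v = s ++ t := (List.take_append_drop r v).symm
  rw [List.rotate_eq_drop_append_take]
  · have h1 : wpow v (m + 1) = s ++ (t ++ wpow v m) := by
      simp [wpow]; rw [hv, List.append_assoc]
    rw [h1, ← hsl, List.drop_left, List.take_left]
    have h2 : wpow v m ++ s = s ++ wpow (t ++ s) m := by
      rw [hv]; exact wpow_swap s t m
    calc (t ++ wpow v m) ++ s = t ++ (wpow v m ++ s) := by simp [List.append_assoc]
      _ = t ++ (s ++ wpow (t ++ s) m) := by rw [h2]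
      _ = wpow (t ++ s) (m + 1) := by simp [wpow, List.append_assoc]
  · rw [length_wpow, Nat.succ_mul]; omega

lemma rotate_append {V : Type*} (x y : List V) :
    (y ++ x).rotate y.length = x ++ y := by
  rw [List.rotate_eq_drop_append_take (by simp)]
  rw [List.drop_left, List.take_left]

lemma prim_cyclic {V : Type*} (x y : List V) (h : Primitive (x ++ y)) :
    Primitive (y ++ x) := by
  constructor
  · intro he
    rcases List.append_eq_nil_iff.mp he with ⟨h1, h2⟩
    exact h.1 (by simp [h1, h2])
  · intro v n hvn
    have hnil : y ++ x ≠ [] := by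
      intro he
      rcases List.append_eq_nil_iff.mp he with ⟨h1, h2⟩
      exact h.1 (by simp [h1, h2])
    rcases n with _ | m
    · exact absurd hvn (by simpa [wpow] using hnil)
    have hvne : v ≠ [] := by
      intro hv
      exact hnil (by rw [hvn, hv, wpow_nil])
    have hvl : 0 < v.length := List.length_pos_iff.mpr hvne
    have hxy : x ++ y = (wpow v (m + 1)).rotate y.length := by
      rw [← hvn, rotate_append]
    have hdiv : y.length = (y.length / v.length) * v.length + y.length % v.length :=
      (Nat.div_add_mod' y.length v.length).symm
    rw [hdiv, rotate_wpow_mul, rotate_wpow_lt v m _ (Nat.mod_lt _ hvl)] at hxy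
    exact h.2 _ _ hxy

theorem stmt8 {V : Type*} (x y : List V) (h : InsRobust (x ++ y)) :
    InsRobust (y ++ x) := by
  obtain ⟨hp, hins⟩ := h
  refine ⟨prim_cyclic x y hp, ?_⟩
  intro u w a huw
  rcases List.append_eq_append_iff.mp huw.symm with ⟨c, hc1, hc2⟩ | ⟨c, hc1, hc2⟩
  ·
    -- u ++ w = y ++ x with y = u ++ c, w = c ++ x
    have hprim : Primitive ((x ++ u) ++ a :: c) := by
      apply hins
      rw [hc1]; simp [List.append_assoc]
    have := prim_cyclic x (u ++ a :: c) (by simpa [List.append_assoc] using hprim)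
    simpa [hc2, List.append_assoc] using this
  · -- u = y ++ c, x = c ++ w
    have hprim : Primitive (c ++ a :: (w ++ y)) := by
      apply hins
      rw [hc2]; simp [List.append_assoc]
    have := prim_cyclic ((c ++ a :: w)) y (by simpa [List.append_assoc] using hprim)
    simpa [hc1, List.append_assoc] using this
end

section
/- Let w be a word of length n over V with w ∉ a* for some letter a. If wa^n is primitive but not ins-robust, then wa^n = u²u₁u₂ where u = u₁bu₂ for some letter b ≠ a, with u₁u₂ a power of a. -/
theorem wpow_length {V : Type*} (v : List V) (m : ℕ) :
    (wpow v m).length = m * v.length := by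
  induction m with
  | zero => simp [wpow]
  | succ k ih => simp [wpow, ih]; ring

theorem wpow_add {V : Type*} (v : List V) (p q : ℕ) :
    wpow v (p + q) = wpow v p ++ wpow v q := by
  induction p with
  | zero => simp [wpow]
  | succ k ih =>
    have : k + 1 + q = (k + q) + 1 := by omega
    rw [this]
    show v ++ wpow v (k + q) = (v ++ wpow v k) ++ wpow v q
    rw [ih, List.append_assoc]

theorem wpow_one {V : Type*} (v : List V) : wpow v 1 = v := by
  show v ++ wpow v 0 = v
  simp [wpow]

theorem wpow_single {V : Type*} (a : V) (k : ℕ) : wpow [a] k = List.replicate k a := by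
  induction k with
  | zero => rfl
  | succ k ih =>
    show [a] ++ wpow [a] k = _
    rw [ih, List.replicate_succ]
    rfl

theorem mem_wpow {V : Type*} {v : List V} {k : ℕ} {b : V} (h : b ∈ wpow v k) : b ∈ v := by
  induction k with
  | zero => simp [wpow] at h
  | succ k ih =>
    rw [show wpow v (k+1) = v ++ wpow v k from rfl, List.mem_append] at h
    rcases h with h | h
    · exact h
    · exact ih h

theorem suffix_of_suffix_len_le {V : Type*} {l₁ l₂ s : List V}
    (h1 : l₁ <:+ s) (h2 : l₂ <:+ s) (h : l₁.length ≤ l₂.length) : l₁ <:+ l₂ := by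
  have := List.prefix_of_prefix_length_le (List.reverse_prefix.mpr h1)
    (List.reverse_prefix.mpr h2) (by simpa)
  exact List.reverse_prefix.mp this

theorem stmt9 {V : Type*} (w : List V) (n : ℕ) (a : V) (hlen : w.length = n)
    (hw : ¬ ∃ k, w = wpow [a] k)
    (hprim : Primitive (w ++ wpow [a] n)) (hins : ¬ InsRobust (w ++ wpow [a] n)) :
    ∃ (u₁ u₂ : List V) (b : V), b ≠ a ∧ (∃ k, u₁ ++ u₂ = wpow [a] k) ∧
      w ++ wpow [a] n = wpow (u₁ ++ b :: u₂) 2 ++ u₁ ++ u₂ := by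
  -- basic facts
  have hwne : w ≠ [] := by
    rintro rfl
    exact hw ⟨0, rfl⟩
  have hn : 1 ≤ n := by
    have := List.length_pos_iff.mpr hwne
    omega
  -- extract the non-primitive insertion
  rw [InsRobust, not_and] at hins
  have h := hins hprim
  push_neg at h
  obtain ⟨x, y, c, hxy, hnp⟩ := h
  rw [Primitive] at hnp
  push_neg at hnp
  obtain ⟨v, m, hvm, hm1⟩ := hnp (by simp)
  -- lengths
  have hxyl : x.length + y.length = 2 * n := by
    have := congrArg List.length hxy
    simp [wpow_length, hlen] at this
    omega
  have hlv : m * v.length = 2 * n + 1 := by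
    have := congrArg List.length hvm
    simp [wpow_length] at this
    omega
  have hv : 0 < v.length := by
    rcases Nat.eq_zero_or_pos v.length with h0 | h0
    · rw [h0] at hlv; omega
    · exact h0
  have hm : 3 ≤ m := by
    rcases m with _ | _ | _ | m
    · omega
    · omega
    · omega
    · omega
  have h3v : 3 * v.length ≤ 2 * n + 1 := by
    calc 3 * v.length ≤ m * v.length := Nat.mul_le_mul_right _ hm
      _ = 2 * n + 1 := hlv
  -- decomposition of x relative to v
  set q := x.length / v.length with hqdef
  set t := x.length % v.length with htdef
  have ht : t < v.length := Nat.mod_lt _ hv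
  have hdm : v.length * q + t = x.length := Nat.div_add_mod x.length v.length
  have hqm : q < m := by
    by_contra hcon
    push_neg at hcon
    have h1 : m * v.length ≤ q * v.length := Nat.mul_le_mul_right _ hcon
    have h2 : q * v.length = v.length * q := Nat.mul_comm _ _
    linarith
  set s := m - 1 - q with hsdef
  have hqs : m = q + 1 + s := by omega
  -- split v at position t
  set b := v[t]'ht with hbdef
  have hvsplit : v = v.take t ++ b :: v.drop (t + 1) := by
    conv_lhs => rw [← List.take_append_drop t v]
    rw [List.drop_eq_getElem_cons ht]
  -- split wpow v m
  have h1 : x ++ c :: y = wpow v q ++ ((v.take t ++ b :: v.drop (t + 1)) ++ wpow v s) := by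
    rw [hvm, hqs, wpow_add, wpow_add, wpow_one, ← hvsplit, List.append_assoc]
  have hsplit : x ++ c :: y =
      (wpow v q ++ v.take t) ++ b :: (v.drop (t + 1) ++ wpow v s) := by
    rw [h1]
    simp [List.append_assoc]
  have hlenA : x.length = (wpow v q ++ v.take t).length := by
    rw [List.length_append, wpow_length, List.length_take, Nat.min_eq_left ht.le,
      Nat.mul_comm]
    omega
  obtain ⟨hx_eq, hy_eq'⟩ := List.append_inj hsplit hlenA
  have hy_eq : y = v.drop (t + 1) ++ wpow v s := by
    injection hy_eq'
  -- the master equation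
  have hmain : w ++ wpow [a] n =
      wpow v q ++ (v.take t ++ (v.drop (t + 1) ++ wpow v s)) := by
    rw [hxy, hx_eq, hy_eq, List.append_assoc]
  -- contradiction lemma: v cannot consist only of a's
  have hcon : (∀ e ∈ v, e = a) → False := by
    intro hall
    apply hw
    refine ⟨n, ?_⟩
    rw [wpow_single]
    have hwa : ∀ e ∈ w, e = a := by
      intro e he
      have hmem : e ∈ w ++ wpow [a] n := by simp [he]
      rw [hmain] at hmem
      simp only [List.mem_append] at hmem
      rcases hmem with h | h | h | h
      · exact hall _ (mem_wpow h)
      · exact hall _ (List.mem_of_mem_take h)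
      · exact hall _ (List.mem_of_mem_drop h)
      · exact hall _ (mem_wpow h)
    have := List.eq_replicate_of_mem hwa
    rwa [hlen] at this
  -- suffixes of length ≤ n consist only of a's
  have hsuf_a : ∀ l : List V, l <:+ (w ++ wpow [a] n) → l.length ≤ n →
      ∀ e ∈ l, e = a := by
    intro l hl hle e he
    have h2 : List.replicate n a <:+ (w ++ wpow [a] n) := by
      rw [wpow_single]
      exact List.suffix_append _ _
    have h3 : l <:+ List.replicate n a :=
      suffix_of_suffix_len_le hl h2 (by simpa using hle)
    exact List.eq_of_mem_replicate (h3.subset he)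
  -- case s ≥ 1 is impossible
  have hs0 : s = 0 := by
    by_contra hs
    have hs1 : 1 ≤ s := Nat.one_le_iff_ne_zero.mpr hs
    obtain ⟨s', hs'⟩ : ∃ s', s = s' + 1 := ⟨s - 1, by omega⟩
    have hws : wpow v s = wpow v s' ++ v := by rw [hs', wpow_add, wpow_one]
    have hsufv : v <:+ (w ++ wpow [a] n) := by
      refine ⟨wpow v q ++ (v.take t ++ (v.drop (t + 1) ++ wpow v s')), ?_⟩
      rw [hmain, hws]
      simp [List.append_assoc]
    exact hcon (hsuf_a v hsufv (by omega))
  -- case m ≥ 4 is impossible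
  have hm3 : m = 3 := by
    by_contra hm4'
    have hm4 : 4 ≤ m := by omega
    have h4v : 4 * v.length ≤ 2 * n + 1 := by
      calc 4 * v.length ≤ m * v.length := Nat.mul_le_mul_right _ hm4
        _ = 2 * n + 1 := hlv
    have hq1 : q = m - 1 := by omega
    obtain ⟨q', hq'⟩ : ∃ q', q = q' + 1 := ⟨q - 1, by omega⟩
    have hwq : wpow v q = wpow v q' ++ v := by rw [hq', wpow_add, wpow_one]
    have hsufl : (v ++ (v.take t ++ v.drop (t + 1))) <:+ (w ++ wpow [a] n) := by
      refine ⟨wpow v q', ?_⟩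
      rw [hmain, hwq, hs0]
      simp [wpow, List.append_assoc]
    have hval : ∀ e ∈ v, e = a := by
      intro e he
      refine hsuf_a _ hsufl ?_ e (by simp [he])
      simp [List.length_take, List.length_drop, Nat.min_eq_left ht.le]
      omega
    exact hcon hval
  -- now m = 3, q = 2, s = 0
  have hq2 : q = 2 := by omega
  refine ⟨v.take t, v.drop (t + 1), b, ?_, ?_, ?_⟩
  · -- b ≠ a
    intro hba
    apply hcon
    intro e he
    rw [hvsplit] at he
    simp only [List.mem_append, List.mem_cons] at he
    have hsuftd : (v.take t ++ v.drop (t + 1)) <:+ (w ++ wpow [a] n) := ⟨wpow v q, by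
      rw [hmain, hs0]
      simp [wpow, List.append_assoc]⟩
    have hlentd : (v.take t ++ v.drop (t + 1)).length ≤ n := by
      simp [List.length_take, List.length_drop, Nat.min_eq_left ht.le]
      omega
    rcases he with h | h | h
    · exact hsuf_a _ hsuftd hlentd e (by simp [h])
    · rw [h, hba]
    · exact hsuf_a _ hsuftd hlentd e (by simp [h])
  · -- u₁ ++ u₂ is a power of a
    have hsuftd : (v.take t ++ v.drop (t + 1)) <:+ (w ++ wpow [a] n) := ⟨wpow v q, by
      rw [hmain, hs0]
      simp [wpow, List.append_assoc]⟩
    have hlentd : (v.take t ++ v.drop (t + 1)).length ≤ n := by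
      simp [List.length_take, List.length_drop, Nat.min_eq_left ht.le]
      omega
    refine ⟨(v.take t ++ v.drop (t + 1)).length, ?_⟩
    rw [wpow_single]
    exact List.eq_replicate_of_mem (hsuf_a _ hsuftd hlentd)
  · -- the structural equation
    rw [hmain, hq2, hs0, ← hvsplit]
    simp [wpow, List.append_assoc]
end
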